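/- Let t₁,…,t_{d+1} be positive naturals, and N₁,…,N_{d+1} naturals with Σ_{j=1}^{d+1} N_j = n. Then the general de Finetti state value τ(a|x) = ∫₀^{c₁} dp₁/c₁ ⋯ ∫₀^{c_d} dp_d/c_d · p₁^{N₁}⋯p_d^{N_d} · [(1/t_{d+1})(1 - Σ_{j=1}^d t_j p_j)]^{N_{d+1}} satisfies τ(a|x) ≥ Π_{j=1}^{d+1} (1/t_j)^{N_j} · multinomial(n; N₁,…,N_{d+1})⁻¹ · (n+1)^{-d}, where c_i = (1/t_i)(1 - Σ_{j<i} t_j p_j). -/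

import Mathlib

open MeasureTheory

/-- The iterated integral `∫₀^{c₁} dp₁/c₁ ⋯` of the de Finetti construction, written
recursively: at each step the "remaining mass" is `r = 1 - Σ_{j<i} t_j p_j`, the upper
integration limit is `c_i = r / t_i`, and after the last step the remaining mass is raised
to the power `M`. -/
noncomputable def deFinettiInt (M : ℕ) : List (ℝ × ℕ) → ℝ → ℝ
  | [], r => r ^ M
  | (t, N) :: rest, r =>
      ∫ p in (0:ℝ)..(r / t), (t / r) * p ^ N * deFinettiInt M rest (r - t * p)

/-!
Every layer of the iterated integral is a Beta integral: with `s` the total exponent carried by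
the inner layers, `∫₀^{r/t} (t/r) p^N (r - t p)^s dp = t^{-N} r^{N+s} N! s! / (N+s+1)!`.
So the integral has a closed form, `Π t_j^{-N_j} · Π_i N_i! s_i! / (N_i+s_i+1)!` with `s_i` the
tail sums. Writing `N! s!/(N+s+1)! = N! s!/(N+s)! · (N+s+1)⁻¹`, the first factors telescope to
`multinomial(n; N)⁻¹` and each `(N_i+s_i+1)⁻¹` is at least `(n+1)⁻¹`.
-/

open Nat

/-- `B(a+1, b+1)`, the Beta function at positive integers. -/
noncomputable def betaNat (a b : ℕ) : ℝ := a ! * b ! / (a + b + 1)!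

theorem betaNat_eq_div_mul_inv (a b : ℕ) :
    betaNat a b = a ! * b ! / (a + b)! * ((a + b : ℕ) + 1 : ℝ)⁻¹ := by
  rw [betaNat, factorial_succ]
  push_cast
  field_simp

theorem integral_pow_mul_one_sub_pow (a b : ℕ) :
    ∫ x in (0:ℝ)..1, x ^ a * (1 - x) ^ b = betaNat a b := by
  have hB := Complex.betaIntegral_eq_Gamma_mul_div (a + 1) (b + 1)
    (by simp only [Complex.add_re, Complex.natCast_re, Complex.one_re]; positivity)
    (by simp only [Complex.add_re, Complex.natCast_re, Complex.one_re]; positivity)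
  rw [show (a + 1 : ℂ) + (b + 1) = (a + b + 1 : ℕ) + 1 by push_cast; ring,
    Complex.Gamma_nat_eq_factorial, Complex.Gamma_nat_eq_factorial,
    Complex.Gamma_nat_eq_factorial, Complex.betaIntegral] at hB
  simp only [add_sub_cancel_right, Complex.cpow_natCast] at hB
  apply Complex.ofReal_injective
  rw [← intervalIntegral.integral_ofReal, betaNat]
  push_cast
  exact hB

theorem integral_pow_mul_sub_pow (a b : ℕ) (c : ℝ) :
    ∫ x in (0:ℝ)..c, x ^ a * (c - x) ^ b = c ^ (a + b + 1) * betaNat a b := by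
  have h := intervalIntegral.smul_integral_comp_mul_left (a := 0) (b := 1)
    (fun x => x ^ a * (c - x) ^ b) c
  rw [mul_zero, mul_one] at h
  rw [← h, ← integral_pow_mul_one_sub_pow, smul_eq_mul, ← intervalIntegral.integral_const_mul,
    ← intervalIntegral.integral_const_mul]
  congr 1
  funext x
  rw [show c - c * x = c * (1 - x) by ring, mul_pow, mul_pow]
  ring

noncomputable def deFinettiCoeff (M : ℕ) : List (ℝ × ℕ) → ℝ
  | [] => 1
  | (t, N) :: rest => t⁻¹ ^ N * betaNat N (M + (rest.map Prod.snd).sum) * deFinettiCoeff M rest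

theorem deFinettiInt_eq (M : ℕ) :
    ∀ (l : List (ℝ × ℕ)), (∀ p ∈ l, 0 < p.1) → ∀ {r : ℝ}, 0 < r →
    deFinettiInt M l r = deFinettiCoeff M l * r ^ (M + (l.map Prod.snd).sum)
  | [], _, r, _ => by simp [deFinettiInt, deFinettiCoeff]
  | (t, N) :: rest, hl, r, hr => by
    have ht : 0 < t := hl _ List.mem_cons_self
    set s := M + (rest.map Prod.snd).sum with hs
    have hrest : ∀ p ∈ Set.Ioo 0 (r / t), (t / r) * p ^ N * deFinettiInt M rest (r - t * p) =
        deFinettiCoeff M rest * t ^ (s + 1) / r * (p ^ N * (r / t - p) ^ s) := by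
      rintro p ⟨-, hp⟩
      rw [deFinettiInt_eq M rest (fun q hq => hl q (List.mem_cons_of_mem _ hq))
        (by rw [lt_div_iff₀ ht] at hp; linarith), ← hs,
        show r - t * p = t * (r / t - p) by field_simp, mul_pow]
      ring
    rw [deFinettiInt, intervalIntegral.integral_congr_Ioo_of_le (by positivity) hrest,
      intervalIntegral.integral_const_mul, integral_pow_mul_sub_pow, deFinettiCoeff]
    simp only [List.map_cons, List.sum_cons, ← hs]
    rw [show M + (N + (rest.map Prod.snd).sum) = N + s by omega]
    simp only [div_pow, inv_pow]
    field_simp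
    ring

theorem betaNat_pos (a b : ℕ) : 0 < betaNat a b := by
  unfold betaNat
  positivity

theorem le_deFinettiCoeff (M n : ℕ) : ∀ (l : List (ℝ × ℕ)), (∀ p ∈ l, 0 ≤ p.1) →
    M + (l.map Prod.snd).sum ≤ n →
    (l.map fun p => p.1⁻¹ ^ p.2).prod *
        (M ! * (l.map fun p => ((p.2)! : ℝ)).prod / (M + (l.map Prod.snd).sum)!) *
        ((n : ℝ) + 1)⁻¹ ^ l.length ≤ deFinettiCoeff M l
  | [], _, _ => by simp [deFinettiCoeff, factorial_ne_zero]
  | (t, N) :: rest, hl, hn => by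
    have ht : 0 ≤ t := hl _ List.mem_cons_self
    have hrest : ∀ p ∈ rest, 0 ≤ p.1 := fun p hp => hl p (List.mem_cons_of_mem _ hp)
    simp only [List.map_cons, List.sum_cons, List.prod_cons, List.length_cons] at hn ⊢
    set s := M + (rest.map Prod.snd).sum with hs
    have ih := le_deFinettiCoeff M n rest hrest (by omega)
    have hbeta : N ! * s ! / (N + s)! * ((n : ℝ) + 1)⁻¹ ≤ betaNat N s := by
      rw [betaNat_eq_div_mul_inv]
      gcongr
      exact_mod_cast (show N + s ≤ n by omega)
    have hprod : 0 ≤ (rest.map fun p => p.1⁻¹ ^ p.2).prod :=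
      List.prod_nonneg fun x hx => by
        obtain ⟨p, hp, rfl⟩ := List.mem_map.1 hx
        exact pow_nonneg (inv_nonneg.2 (hrest p hp)) _
    have hfac : 0 ≤ (rest.map fun p => ((p.2)! : ℝ)).prod := List.prod_nonneg fun x hx => by
      obtain ⟨p, -, rfl⟩ := List.mem_map.1 hx
      positivity
    have hbeta_pos := betaNat_pos N s
    calc _ = t⁻¹ ^ N * (N ! * s ! / (N + s)! * ((n : ℝ) + 1)⁻¹) *
          ((rest.map fun p => p.1⁻¹ ^ p.2).prod *
            (M ! * (rest.map fun p => ((p.2)! : ℝ)).prod / s !) *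
            ((n : ℝ) + 1)⁻¹ ^ rest.length) := by
          rw [show M + (N + (rest.map Prod.snd).sum) = N + s by omega, pow_succ]
          field_simp
      _ ≤ t⁻¹ ^ N * betaNat N s * deFinettiCoeff M rest := by
          gcongr

@[to_additive]
theorem prod_map_list_range {M : Type*} [CommMonoid M] (f : ℕ → M) (n : ℕ) :
    ((List.range n).map f).prod = ∏ j ∈ Finset.range n, f j := rfl

/-- Lower bound on the general de Finetti state (0-based indexing: `t 0,…,t d` and
`N 0,…,N d` play the roles of `t₁,…,t_{d+1}` and `N₁,…,N_{d+1}`): the value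
`τ(a|x) = ∫₀^{c₁} dp₁/c₁ ⋯ ∫₀^{c_d} dp_d/c_d  p₁^{N₁}⋯p_d^{N_d}
  [(1/t_{d+1})(1-Σ_{j≤d} t_j p_j)]^{N_{d+1}}`
is at least `Π_{j=1}^{d+1} (1/t_j)^{N_j} · multinomial(n; N₁,…,N_{d+1})⁻¹ · (n+1)^{-d}`. -/
theorem deFinetti_state_lower_bound (d n : ℕ) (t : ℕ → ℕ) (N : ℕ → ℕ)
    (ht : ∀ j, 0 < t j)
    (hsum : ∑ j ∈ Finset.range (d + 1), N j = n) :
    (∏ j ∈ Finset.range (d + 1), ((t j : ℝ))⁻¹ ^ (N j)) *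
        ((Nat.multinomial (Finset.range (d + 1)) N : ℝ))⁻¹ * (((n : ℝ) + 1))⁻¹ ^ d ≤
      ((t d : ℝ))⁻¹ ^ (N d) *
        deFinettiInt (N d) ((List.range d).map (fun j => ((t j : ℝ), N j))) 1 := by
  set l := (List.range d).map (fun j => ((t j : ℝ), N j)) with hl
  have hn : N d + (l.map Prod.snd).sum = n := by
    rw [hl, List.map_map, sum_map_list_range, ← hsum, Finset.sum_range_succ, add_comm]
    rfl
  have hmultinomial : ((Nat.multinomial (Finset.range (d + 1)) N : ℝ))⁻¹ =
      (∏ j ∈ Finset.range (d + 1), ((N j)! : ℝ)) / n ! := by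
    have h := Nat.multinomial_spec (Finset.range (d + 1)) N
    rw [hsum] at h
    rw [← h]
    push_cast
    field_simp
  rw [deFinettiInt_eq (N d) l (by simp [hl, ht]) one_pos, one_pow, mul_one]
  calc _ = ((t d : ℝ))⁻¹ ^ (N d) * ((l.map fun p => p.1⁻¹ ^ p.2).prod *
        ((N d)! * (l.map fun p => ((p.2)! : ℝ)).prod / (N d + (l.map Prod.snd).sum)!) *
        ((n : ℝ) + 1)⁻¹ ^ l.length) := by
        rw [hn, hmultinomial]
        simp only [hl, List.map_map, List.length_map, List.length_range]
        simp only [Function.comp_def, prod_map_list_range, Finset.prod_range_succ]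
        ring
    _ ≤ _ := by
        gcongr
        exact le_deFinettiCoeff (N d) n l (by simp [hl]) hn.le
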